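/- arXiv:1210.7105 — 3 statements merged into one kernel-verified Lean document; each statement's English description precedes it below -/
import Mathlib

section
/- The Hartogs triangle T = {(z₁,z₂) ∈ ℂ² : |z₁| < |z₂| < 1} does not have the segment property; that is, there is no neighbourhood U of the boundary point 0 and nonzero vector w ∈ ℂ² such that z + t·w ∈ T for every z in the closure of T intersected with U and every 0 < t < 1. -/
open Set

/-- The Hartogs triangle. -/
def HartogsTriangle : Set (ℂ × ℂ) :=
  {z : ℂ × ℂ | ‖z.1‖ < ‖z.2‖ ∧ ‖z.2‖ < 1}

/-!
Testing the segment property at `0 ∈ closure T` forces `w₂ ≠ 0`, since points of `T` have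
nonzero second coordinate. But the diagonal points `(c, c)` with `c = -t w₂` lie in `closure T`
and tend to `0` as `t → 0⁺`, while `t • w` moves them onto `{z₂ = 0}`, which misses `T`.
-/

open Filter Topology

namespace HartogsTriangle

theorem snd_ne_zero {z : ℂ × ℂ} (hz : z ∈ HartogsTriangle) : z.2 ≠ 0 :=
  norm_pos_iff.mp ((norm_nonneg _).trans_lt hz.1)

theorem zero_mem_closure : (0 : ℂ × ℂ) ∈ closure HartogsTriangle := by
  have hlim : Tendsto (fun s : ℝ => ((0 : ℂ), (s : ℂ))) (𝓝[>] 0) (𝓝 0) :=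
    ((by fun_prop : Continuous fun s : ℝ => ((0 : ℂ), (s : ℂ))).tendsto' 0 0 (by simp)).mono_left
      nhdsWithin_le_nhds
  refine mem_closure_of_tendsto hlim ?_
  filter_upwards [Ioo_mem_nhdsGT (zero_lt_one' ℝ)] with s ⟨hs0, hs1⟩
  simpa [HartogsTriangle, abs_of_pos hs0] using And.intro hs0 hs1

theorem mk_mem_closure {a b : ℂ} (hab : ‖a‖ ≤ ‖b‖) (hb : ‖b‖ < 1) (hb0 : b ≠ 0) :
    (a, b) ∈ closure HartogsTriangle := by
  have hlim : Tendsto (fun s : ℝ => ((s : ℂ) * a, b)) (𝓝[<] 1) (𝓝 (a, b)) :=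
    ((by fun_prop : Continuous fun s : ℝ => ((s : ℂ) * a, b)).tendsto' 1 _ (by simp)).mono_left
      nhdsWithin_le_nhds
  refine mem_closure_of_tendsto hlim ?_
  filter_upwards [Ioo_mem_nhdsLT (zero_lt_one' ℝ)] with s ⟨hs0, hs1⟩
  refine ⟨?_, hb⟩
  calc ‖(s : ℂ) * a‖ = s * ‖a‖ := by simp [abs_of_pos hs0]
    _ < 1 * ‖b‖ := mul_lt_mul_of_lt_of_le_of_nonneg_of_pos hs1 hab hs0.le (norm_pos_iff.mpr hb0)
    _ = ‖b‖ := one_mul _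

end HartogsTriangle

/-- The Hartogs triangle does not have the segment property at the boundary point `0`:
there is no neighbourhood `U` of `0` and nonzero vector `w ∈ ℂ²` such that
`z + t • w ∈ T` for all `z ∈ closure T ∩ U` and all `0 < t < 1`. -/
theorem hartogs_triangle_not_segment_property :
    ¬ ∃ (U : Set (ℂ × ℂ)) (w : ℂ × ℂ), IsOpen U ∧ (0 : ℂ × ℂ) ∈ U ∧ w ≠ 0 ∧
      ∀ z ∈ closure HartogsTriangle ∩ U, ∀ t : ℝ, 0 < t → t < 1 →
        z + (t : ℂ) • w ∈ HartogsTriangle := by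
  rintro ⟨U, w, hU, h0U, -, hseg⟩
  have hw : w.2 ≠ 0 := by
    simpa using HartogsTriangle.snd_ne_zero
      (hseg 0 ⟨HartogsTriangle.zero_mem_closure, h0U⟩ (1 / 2) (by norm_num) (by norm_num))
  set c : ℝ → ℂ := fun t => -(t : ℂ) * w.2
  have hc : Tendsto c (𝓝[>] 0) (𝓝 0) :=
    ((by fun_prop : Continuous c).tendsto' 0 0 (by simp [c])).mono_left nhdsWithin_le_nhds
  obtain ⟨t, ⟨ht0, ht1⟩, hcU, hc1⟩ : ∃ t ∈ Ioo (0 : ℝ) 1, (c t, c t) ∈ U ∧ ‖c t‖ < 1 :=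
    (Eventually.and (Ioo_mem_nhdsGT (zero_lt_one' ℝ)) <|
      ((hc.prodMk_nhds hc).eventually (hU.mem_nhds h0U)).and
        (hc.norm.eventually (gt_mem_nhds (by norm_num)))).exists
  have hct : c t ≠ 0 := mul_ne_zero (by simpa using ht0.ne') hw
  have hmem := hseg (c t, c t) ⟨HartogsTriangle.mk_mem_closure le_rfl hc1 hct, hcU⟩ t ht0 ht1
  exact HartogsTriangle.snd_ne_zero hmem (by simp [c])
end

section
/- Let φ : ℝ^{n-1} → ℝ be Lipschitz with constant C ≥ 1 and let Ω = {x = (x', xₙ) ∈ ℝⁿ : xₙ > φ(x')}. Then for every x ∈ Ω and every ε > 0, one has dist(x, ∂Ω) + ε/(2C) ≤ dist(x + ε·eₙ, ∂Ω) ≤ dist(x, ∂Ω) + ε. -/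
/-!
The ball of radius `d = dist(x, ∂Ω)` around `x` lies in `Ω`, since it is connected and misses
`∂Ω`. By the Lipschitz bound, `Ω` is stable under adding vectors `k` of the cone
`C‖k'‖ ≤ kₙ`, and that cone contains the ball of radius `ε/(2C)` around `ε eₙ` when `C ≥ 1`.
Hence the ball of radius `d + ε/(2C)` around `x + ε eₙ`, the Minkowski sum of these two balls,
lies in `Ω` and misses `∂Ω`. The upper bound is the `1`-Lipschitz property of `dist(·, ∂Ω)`.
-/

open Set Metric

/-- The projection of `x ∈ ℝ^{n+1}` onto its first `n` coordinates. -/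
noncomputable def frontCoords {n : ℕ} (x : EuclideanSpace ℝ (Fin (n + 1))) :
    EuclideanSpace ℝ (Fin n) :=
  WithLp.toLp 2 fun i => x i.castSucc

theorem ball_infDist_frontier_subset {E : Type*} [NormedAddCommGroup E] [NormedSpace ℝ E]
    {U : Set E} (hU : IsOpen U) {x : E} (hx : x ∈ U) :
    ball x (infDist x (frontier U)) ⊆ U := by
  rcases (ball x (infDist x (frontier U))).eq_empty_or_nonempty with h | h
  · simp [h]
  refine (convex_ball x _).isPreconnected.subset_of_closure_inter_subset hU
    ⟨x, mem_ball_self (nonempty_ball.mp h), hx⟩ ?_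
  rintro z ⟨hzU, hzB⟩
  rw [closure_eq_self_union_frontier] at hzU
  exact hzU.resolve_right (ball_infDist_subset_compl hzB)

section Supergraph

variable {n : ℕ}

def supergraph (φ : EuclideanSpace ℝ (Fin n) → ℝ) : Set (EuclideanSpace ℝ (Fin (n + 1))) :=
  {x | φ (frontCoords x) < x (Fin.last n)}

theorem mem_supergraph {φ : EuclideanSpace ℝ (Fin n) → ℝ} {x : EuclideanSpace ℝ (Fin (n + 1))} :
    x ∈ supergraph φ ↔ φ (frontCoords x) < x (Fin.last n) := Iff.rfl

theorem frontCoords_add (x y : EuclideanSpace ℝ (Fin (n + 1))) :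
    frontCoords (x + y) = frontCoords x + frontCoords y := rfl

theorem frontCoords_sub (x y : EuclideanSpace ℝ (Fin (n + 1))) :
    frontCoords (x - y) = frontCoords x - frontCoords y := rfl

theorem frontCoords_smul (c : ℝ) (x : EuclideanSpace ℝ (Fin (n + 1))) :
    frontCoords (c • x) = c • frontCoords x := rfl

@[simp]
theorem frontCoords_single_last (c : ℝ) :
    frontCoords (EuclideanSpace.single (Fin.last n) c) = 0 := by
  ext i
  simp [frontCoords]

theorem norm_sq_eq_norm_frontCoords_sq_add (x : EuclideanSpace ℝ (Fin (n + 1))) :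
    ‖x‖ ^ 2 = ‖frontCoords x‖ ^ 2 + x (Fin.last n) ^ 2 := by
  simp [EuclideanSpace.norm_sq_eq, Fin.sum_univ_castSucc, frontCoords]

theorem norm_frontCoords_le (x : EuclideanSpace ℝ (Fin (n + 1))) :
    ‖frontCoords x‖ ≤ ‖x‖ := by
  have := norm_sq_eq_norm_frontCoords_sq_add x
  exact le_of_sq_le_sq (by nlinarith [sq_nonneg (x (Fin.last n))]) (norm_nonneg x)

theorem continuous_frontCoords : Continuous (frontCoords (n := n)) :=
  LipschitzWith.continuous (K := 1) <| .of_dist_le_mul fun x y => by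
    simpa [dist_eq_norm, ← frontCoords_sub] using norm_frontCoords_le (x - y)

theorem isOpen_supergraph {φ : EuclideanSpace ℝ (Fin n) → ℝ} (hφ : Continuous φ) :
    IsOpen (supergraph φ) :=
  isOpen_lt (hφ.comp continuous_frontCoords) (by fun_prop)

theorem supergraph_ne_univ (φ : EuclideanSpace ℝ (Fin n) → ℝ) : supergraph φ ≠ univ := by
  intro h
  have : φ 0 • EuclideanSpace.single (Fin.last n) 1 ∈ supergraph φ := h ▸ mem_univ _
  simp [mem_supergraph, frontCoords_smul] at this

theorem add_mem_supergraph {C : ℝ} {φ : EuclideanSpace ℝ (Fin n) → ℝ}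
    (hφ : ∀ x y, φ x - φ y ≤ C * ‖x - y‖) {b k : EuclideanSpace ℝ (Fin (n + 1))}
    (hb : b ∈ supergraph φ) (hk : C * ‖frontCoords k‖ ≤ k (Fin.last n)) :
    b + k ∈ supergraph φ := by
  have := hφ (frontCoords b + frontCoords k) (frontCoords b)
  rw [add_sub_cancel_left] at this
  rw [mem_supergraph] at hb ⊢
  rw [frontCoords_add, PiLp.add_apply]
  linarith

theorem ball_smul_single_last_subset {C ε r : ℝ} (hC : 0 ≤ C) (hr : (C + 1) * r ≤ ε) :
    ball (ε • EuclideanSpace.single (Fin.last n) (1 : ℝ)) r ⊆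
      {k | C * ‖frontCoords k‖ ≤ k (Fin.last n)} := by
  intro k hk
  set w := k - ε • EuclideanSpace.single (Fin.last n) (1 : ℝ)
  have hw : ‖w‖ < r := mem_ball_iff_norm.mp hk
  have hfront : frontCoords k = frontCoords w := by
    simp [w, frontCoords_sub, frontCoords_smul]
  have hlast : k (Fin.last n) = ε + w (Fin.last n) := by simp [w]
  have hC_le : C * ‖frontCoords w‖ ≤ C * r :=
    mul_le_mul_of_nonneg_left ((norm_frontCoords_le w).trans hw.le) hC
  have hw_last : -‖w‖ ≤ w (Fin.last n) := neg_le_of_abs_le (PiLp.norm_apply_le w _)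
  rw [mem_ofPred_eq, hfront, hlast]
  linarith

end Supergraph

/-- If `φ : ℝⁿ → ℝ` is Lipschitz with constant `C ≥ 1` and `Ω` is the open region above its
graph, then for every `x ∈ Ω` and `ε > 0`,
`dist(x, ∂Ω) + ε/(2C) ≤ dist(x + ε • e_{n+1}, ∂Ω) ≤ dist(x, ∂Ω) + ε`. -/
theorem dist_translate_lipschitz_supergraph {n : ℕ} (C : ℝ) (hC : 1 ≤ C)
    (φ : EuclideanSpace ℝ (Fin n) → ℝ)
    (hφ : ∀ x y, |φ x - φ y| ≤ C * ‖x - y‖)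
    (Ω : Set (EuclideanSpace ℝ (Fin (n + 1))))
    (hΩ : Ω = {x | φ (frontCoords x) < x (Fin.last n)})
    (x : EuclideanSpace ℝ (Fin (n + 1))) (hx : x ∈ Ω) (ε : ℝ) (hε : 0 < ε) :
    infDist x (frontier Ω) + ε / (2 * C) ≤
        infDist (x + ε • EuclideanSpace.single (Fin.last n) (1 : ℝ)) (frontier Ω) ∧
      infDist (x + ε • EuclideanSpace.single (Fin.last n) (1 : ℝ)) (frontier Ω) ≤
        infDist x (frontier Ω) + ε := by
  obtain rfl : Ω = supergraph φ := hΩ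
  set e := EuclideanSpace.single (Fin.last n) (1 : ℝ)
  set F := frontier (supergraph φ)
  have hC0 : 0 < C := one_pos.trans_le hC
  have hφc : Continuous φ :=
    (LipschitzWith.of_dist_le_mul (K := C.toNNReal) fun a b => by
      simpa [Real.dist_eq, dist_eq_norm, hC0.le] using hφ a b).continuous
  have hΩo := isOpen_supergraph hφc
  have hFne : F.Nonempty := nonempty_frontier_iff.mpr ⟨⟨x, hx⟩, supergraph_ne_univ φ⟩
  have hd : 0 < infDist x F :=
    (isClosed_frontier.notMem_iff_infDist_pos hFne).mp fun h => hΩo.inter_frontier_eq.subset ⟨hx, h⟩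
  refine ⟨(le_infDist hFne).mpr fun y hy => ?_, ?_⟩
  · have hball : ball (x + ε • e) (infDist x F + ε / (2 * C)) ⊆ supergraph φ := by
      rw [← ball_add_ball hd (by positivity)]
      rintro _ ⟨b, hb, k, hk, rfl⟩
      refine add_mem_supergraph (fun a b => (le_abs_self _).trans (hφ a b))
        (ball_infDist_frontier_subset hΩo hx hb)
        (ball_smul_single_last_subset hC0.le ?_ hk)
      field_simp
      linarith
    by_contra! h
    exact hΩo.inter_frontier_eq.subset ⟨hball (mem_ball'.mpr h), hy⟩
  · calc infDist (x + ε • e) F ≤ infDist x F + dist (x + ε • e) x := infDist_le_infDist_add_dist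
      _ = infDist x F + ε := by simp [e, dist_eq_norm, norm_smul, hε.le]
end

section
/- Let W₀ be the principal branch of the Lambert W function. The function f(x) = 1 + |x|·W₀(1/|x|) for x ∈ ℝ \ {0}, extended by f(0) = 1, is Log-Lipschitz continuous on a neighbourhood of 0, i.e. there is C > 0 with |f(x) - f(y)| ≤ C|x-y|·log(1/|x-y|) for x, y near 0, but f is not Lipschitz at 0. -/
/-!
On `[0, ∞)` the branch `W₀` is the inverse of the increasing map `t ↦ t eᵗ`, so comparisons of
`W₀ u` with `s` reduce to comparisons of `u` with `s eˢ`. This gives `W₀ u ≤ log u` for `u ≥ e`,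
`W₀ u ≤ W₀ v + log (u / v)` for `0 < v ≤ u`, and `W₀ u → ∞`. For `g t = t W₀(1/t)` and
`0 ≤ a ≤ b ≤ e⁻¹`, monotonicity of `W₀` and the first bound give
`g b - g a ≤ (b - a) W₀(1/b) ≤ (b - a) log (1/b) ≤ (b - a) log (1/(b - a))`, and the second
gives `g a - g b ≤ a log (b/a) ≤ b - a ≤ (b - a) log (1/(b - a))`.
Hence `f = 1 + g ∘ |·|` is log-Lipschitz near `0`, while `(f x - f 0) / x = W₀(1/x)` is unbounded.
-/

open Set Filter Topology Real

-- Since `t ↦ t eᵗ` is injective on `[-1, ∞)`, this pins `W` down to `W₀` on `[0, ∞)`.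
def IsLambertW (W : ℝ → ℝ) : Prop :=
  ∀ u : ℝ, 0 ≤ u → -1 ≤ W u ∧ W u * exp (W u) = u

noncomputable def lambertCusp (W : ℝ → ℝ) (t : ℝ) : ℝ := t * W (1 / t)

theorem strictMonoOn_mul_exp : StrictMonoOn (fun t : ℝ => t * exp t) (Ici (-1)) := by
  refine strictMonoOn_of_deriv_pos (convex_Ici _) (by fun_prop) fun x hx => ?_
  rw [interior_Ici, mem_Ioi] at hx
  have hderiv : HasDerivAt (fun t : ℝ => t * exp t) (1 * exp x + x * exp x) x :=
    (hasDerivAt_id x).mul (hasDerivAt_exp x)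
  rw [hderiv.deriv, ← add_mul]
  exact mul_pos (by linarith) (exp_pos x)

theorem negMulLog_monotoneOn : MonotoneOn negMulLog (Icc 0 (exp (-1))) := by
  refine monotoneOn_of_deriv_nonneg (convex_Icc _ _) continuous_negMulLog.continuousOn
    (differentiableOn_negMulLog.mono fun x hx => ?_) fun x hx => ?_
  · rw [interior_Icc] at hx
    exact hx.1.ne'
  · rw [interior_Icc] at hx
    rw [deriv_negMulLog hx.1.ne']
    have : log x ≤ -1 := by simpa using log_le_log hx.1 hx.2.le
    linarith

theorem negMulLog_eq_mul_log_one_div (x : ℝ) : negMulLog x = x * log (1 / x) := by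
  rw [negMulLog, one_div, log_inv]
  ring

theorem self_le_negMulLog {x : ℝ} (hx₀ : 0 ≤ x) (hx : x ≤ exp (-1)) : x ≤ negMulLog x := by
  rcases hx₀.eq_or_lt with rfl | hx₀
  · simp
  · have : log x ≤ -1 := by simpa using log_le_log hx₀ hx
    rw [negMulLog]
    nlinarith

namespace IsLambertW

variable {W : ℝ → ℝ} {u v s : ℝ}

theorem apply_le_iff (hW : IsLambertW W) (hu : 0 ≤ u) (hs : -1 ≤ s) :
    W u ≤ s ↔ u ≤ s * exp s := by
  conv_rhs => rw [← (hW u hu).2]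
  exact (strictMonoOn_mul_exp.le_iff_le (hW u hu).1 hs).symm

theorem le_apply_iff (hW : IsLambertW W) (hu : 0 ≤ u) (hs : -1 ≤ s) :
    s ≤ W u ↔ s * exp s ≤ u := by
  conv_rhs => rw [← (hW u hu).2]
  exact (strictMonoOn_mul_exp.le_iff_le hs (hW u hu).1).symm

theorem nonneg (hW : IsLambertW W) (hu : 0 ≤ u) : 0 ≤ W u :=
  (hW.le_apply_iff hu (by norm_num)).2 (by simpa using hu)

theorem monotoneOn (hW : IsLambertW W) : MonotoneOn W (Ici 0) := fun _ hv u hu hvu =>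
  (hW.apply_le_iff hv (hW u hu).1).2 ((hW u hu).2.symm ▸ hvu)

theorem le_log (hW : IsLambertW W) (hu : exp 1 ≤ u) : W u ≤ log u := by
  have hu₀ : 0 < u := (exp_pos 1).trans_le hu
  have hlog : 1 ≤ log u := by rwa [le_log_iff_exp_le hu₀]
  rw [hW.apply_le_iff hu₀.le (by linarith), exp_log hu₀]
  nlinarith

theorem le_add_log_div (hW : IsLambertW W) (hv : 0 < v) (hvu : v ≤ u) :
    W u ≤ W v + log (u / v) := by
  have hu : 0 < u := hv.trans_le hvu
  have hlog : 0 ≤ log (u / v) := log_nonneg ((one_le_div hv).2 hvu)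
  rw [hW.apply_le_iff hu.le (by linarith [(hW v hv.le).1]), exp_add, exp_log (div_pos hu hv)]
  have hWv : W v * exp (W v) * (u / v) = u := by
    rw [(hW v hv.le).2]
    field_simp
  have : 0 ≤ log (u / v) * (exp (W v) * (u / v)) := mul_nonneg hlog (by positivity)
  linarith

theorem tendsto_atTop (hW : IsLambertW W) : Tendsto W atTop atTop := by
  refine Filter.tendsto_atTop.2 fun M => ?_
  filter_upwards [eventually_ge_atTop (max M 0 * exp (max M 0)), eventually_ge_atTop 0]
    with u hMu hu
  exact (le_max_left M 0).trans ((hW.le_apply_iff hu (by simp)).2 hMu)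

theorem lambertCusp_sub_le_negMulLog (hW : IsLambertW W) {a b : ℝ} (ha : 0 ≤ a) (hab : a ≤ b)
    (hb : b ≤ exp (-1)) : lambertCusp W b - lambertCusp W a ≤ negMulLog (b - a) := by
  rcases hab.eq_or_lt with rfl | hab
  · simp
  have hb₀ : 0 < b := ha.trans_lt hab
  have hd₀ : 0 < b - a := sub_pos.2 hab
  have hinv : exp 1 ≤ 1 / b := by
    rwa [le_one_div (exp_pos 1) hb₀, one_div, ← exp_neg]
  have hWa : a * W (1 / b) ≤ a * W (1 / a) := by
    rcases ha.eq_or_lt with rfl | ha₀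
    · simp
    · exact mul_le_mul_of_nonneg_left (hW.monotoneOn (mem_Ici.2 (by positivity))
        (mem_Ici.2 (by positivity)) (one_div_le_one_div_of_le ha₀ hab.le)) ha
  calc lambertCusp W b - lambertCusp W a ≤ (b - a) * W (1 / b) := by
        unfold lambertCusp; linarith
    _ ≤ (b - a) * log (1 / b) := mul_le_mul_of_nonneg_left (hW.le_log hinv) hd₀.le
    _ ≤ (b - a) * log (1 / (b - a)) := mul_le_mul_of_nonneg_left
        (log_le_log (by positivity) (one_div_le_one_div_of_le hd₀ (by linarith))) hd₀.le
    _ = negMulLog (b - a) := (negMulLog_eq_mul_log_one_div _).symm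

theorem lambertCusp_sub_le_sub (hW : IsLambertW W) {a b : ℝ} (ha : 0 ≤ a) (hab : a ≤ b) :
    lambertCusp W a - lambertCusp W b ≤ b - a := by
  unfold lambertCusp
  rcases ha.eq_or_lt with rfl | ha₀
  · have := mul_nonneg hab (hW.nonneg (one_div_nonneg.2 hab))
    simp only [zero_mul, zero_sub, sub_zero]
    linarith
  have hb₀ : 0 < b := ha₀.trans_le hab
  have hWb : 0 ≤ W (1 / b) := hW.nonneg (by positivity)
  have hWa : W (1 / a) ≤ W (1 / b) + log (b / a) := by
    have := hW.le_add_log_div (one_div_pos.2 hb₀) (one_div_le_one_div_of_le ha₀ hab)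
    rwa [div_div_div_cancel_left' _ _ one_ne_zero] at this
  have hlog : a * log (b / a) ≤ b - a := by
    have := mul_le_mul_of_nonneg_left (log_le_sub_one_of_pos (div_pos hb₀ ha₀)) ha₀.le
    rwa [mul_sub, mul_div_cancel₀ _ ha₀.ne', mul_one] at this
  nlinarith [mul_le_mul_of_nonneg_left hWa ha₀.le]

theorem abs_lambertCusp_sub_le_negMulLog (hW : IsLambertW W) {a b : ℝ}
    (ha : a ∈ Icc 0 (exp (-1))) (hb : b ∈ Icc 0 (exp (-1))) :
    |lambertCusp W b - lambertCusp W a| ≤ negMulLog |b - a| := by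
  wlog hab : a ≤ b generalizing a b
  · rw [abs_sub_comm, abs_sub_comm b]
    exact this hb ha (le_of_not_ge hab)
  rw [abs_of_nonneg (sub_nonneg.2 hab), abs_sub_le_iff]
  exact ⟨hW.lambertCusp_sub_le_negMulLog ha.1 hab hb.2,
    (hW.lambertCusp_sub_le_sub ha.1 hab).trans
      (self_le_negMulLog (sub_nonneg.2 hab) (by linarith [ha.1, hb.2]))⟩

end IsLambertW

/-- Let `W₀` be the principal branch of the Lambert W function (inverse of `t ↦ t·eᵗ` on
`[-1,∞)`). The function `f(x) = 1 + |x|·W₀(1/|x|)` (with `f(0) = 1`) is Log-Lipschitz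
continuous near `0`, but is not Lipschitz at `0`. -/
theorem lambert_cusp_logLipschitz_not_lipschitz
    (W : ℝ → ℝ)
    (hW : ∀ x : ℝ, -(Real.exp 1)⁻¹ ≤ x → -1 ≤ W x ∧ W x * Real.exp (W x) = x)
    (f : ℝ → ℝ)
    (hf : ∀ x : ℝ, x ≠ 0 → f x = 1 + |x| * W (1 / |x|)) (hf0 : f 0 = 1) :
    (∃ C > (0 : ℝ), ∃ r > (0 : ℝ), ∀ x y : ℝ, |x| < r → |y| < r →
        |f x - f y| ≤ C * |x - y| * Real.log (1 / |x - y|)) ∧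
      ¬ ∃ (L : ℝ) (r : ℝ), 0 < r ∧ ∀ x : ℝ, |x| < r → |f x - f 0| ≤ L * |x| := by
  have hW₀ : IsLambertW W := fun u hu => hW u ((neg_nonpos.2 (by positivity)).trans hu)
  have hf' : ∀ x, f x = 1 + lambertCusp W |x| := fun x => by
    rcases eq_or_ne x 0 with rfl | hx
    · simp [hf0, lambertCusp]
    · exact hf x hx
  constructor
  · refine ⟨1, one_pos, exp (-1) / 2, by positivity, fun x y hx hy => ?_⟩
    have he := exp_pos (-1)
    have hxy : |x - y| ≤ exp (-1) := (abs_sub _ _).trans (by linarith)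
    calc |f x - f y| = |lambertCusp W (|x|) - lambertCusp W (|y|)| := by
          rw [hf', hf', add_sub_add_left_eq_sub]
      _ ≤ negMulLog |(|x| - |y|)| := hW₀.abs_lambertCusp_sub_le_negMulLog
          ⟨abs_nonneg y, by linarith⟩ ⟨abs_nonneg x, by linarith⟩
      _ ≤ negMulLog |x - y| := negMulLog_monotoneOn
          ⟨abs_nonneg _, (abs_abs_sub_abs_le x y).trans hxy⟩ ⟨abs_nonneg _, hxy⟩
          (abs_abs_sub_abs_le x y)
      _ = 1 * |x - y| * log (1 / |x - y|) := by rw [negMulLog_eq_mul_log_one_div, one_mul]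
  · rintro ⟨L, r, hr, hL⟩
    obtain ⟨x, hxL, hx₀, hxr⟩ : ∃ x, L < W (1 / x) ∧ 0 < x ∧ x < r :=
      (((hW₀.tendsto_atTop.comp tendsto_inv_nhdsGT_zero).eventually_gt_atTop L).and
        (Ioo_mem_nhdsGT hr)).exists.imp fun x h => by simpa [one_div] using h
    have hLx := hL x (by rwa [abs_of_pos hx₀])
    rw [hf', hf0, add_sub_cancel_left, lambertCusp, abs_of_pos hx₀,
      abs_of_nonneg (mul_nonneg hx₀.le (hW₀.nonneg (by positivity)))] at hLx
    nlinarith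
end
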